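/- Let G be a finite simple graph and let uv be a non-edge of G with a = d_G(u) and b = d_G(v). Then the fourth power sums of the complex roots of the Laplacian matching polynomials satisfy p_4(G+uv) − p_4(G) = 4·(S_u + S_v) + 4a³ + 18a² + 4ab + 24a + 4b³ + 18b² + 24b + 16, where S_w = Σ_{x∈N_G(w)} d_G(x). -/

import Mathlib

open Polynomial Finset

namespace LMRIV

open scoped Classical

variable {V : Type*}

/-- The degree of a vertex. -/
noncomputable def deg [Fintype V] (G : SimpleGraph V) (v : V) : ℕ :=
  (univ.filter fun w => G.Adj v w).card

/-- The finset of edges of `G`. -/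
noncomputable def edges [Fintype V] (G : SimpleGraph V) : Finset (Sym2 V) :=
  univ.filter fun e => e ∈ G.edgeSet

/-- A matching: a set of pairwise disjoint edges. -/
def IsMatching (G : SimpleGraph V) (M : Finset (Sym2 V)) : Prop :=
  (↑M : Set (Sym2 V)) ⊆ G.edgeSet ∧
    ∀ e ∈ M, ∀ f ∈ M, e ≠ f → ∀ x : V, x ∈ e → x ∉ f

/-- The finset of all matchings of `G` (including the empty matching). -/
noncomputable def matchings [Fintype V] (G : SimpleGraph V) : Finset (Finset (Sym2 V)) :=
  univ.filter fun M => IsMatching G M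

/-- The set of vertices covered by a matching. -/
noncomputable def covered [Fintype V] (M : Finset (Sym2 V)) : Finset V :=
  univ.filter fun x => ∃ e ∈ M, x ∈ e

/-- The Laplacian matching polynomial of `G`, with coefficients in `R`. -/
noncomputable def LM (R : Type*) [CommRing R] [Fintype V] (G : SimpleGraph V) :
    Polynomial R :=
  ∑ M ∈ matchings G, (-1 : Polynomial R) ^ M.card *
    ∏ v ∈ univ \ covered M, (X - C (deg G v : R))

/-- `p_r(G)`: the sum of the `r`-th powers of the complex roots of `LM_G`. -/
noncomputable def psum [Fintype V] (G : SimpleGraph V) (r : ℕ) : ℂ :=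
  (((LM ℂ G).roots).map (· ^ r)).sum

/-- `A_r(G) = Σ_v d_G(v)^r`. -/
noncomputable def A [Fintype V] (G : SimpleGraph V) (r : ℕ) : ℕ :=
  ∑ v : V, (deg G v) ^ r

/-- `B(G) = Σ_{xy ∈ E(G)} d_G(x) d_G(y)`. -/
noncomputable def B [Fintype V] (G : SimpleGraph V) : ℕ :=
  ∑ e ∈ edges G, Sym2.lift ⟨fun x y => deg G x * deg G y, fun x y => mul_comm _ _⟩ e

/-- `C(G) = Σ_{xy ∈ E(G)} (d_G(x)^2 d_G(y) + d_G(x) d_G(y)^2)`. -/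
noncomputable def Csum [Fintype V] (G : SimpleGraph V) : ℕ :=
  ∑ e ∈ edges G,
    Sym2.lift ⟨fun x y => deg G x ^ 2 * deg G y + deg G x * deg G y ^ 2,
      fun x y => by ring⟩ e

/-- The graph obtained from `G` by adding the edge `uv`. -/
def addEdge (G : SimpleGraph V) (u v : V) : SimpleGraph V :=
  G ⊔ SimpleGraph.fromEdgeSet {s(u, v)}

/-- `S_w = Σ_{x ∈ N_G(w)} d_G(x)`. -/
noncomputable def Ssum [Fintype V] (G : SimpleGraph V) (w : V) : ℕ :=
  ∑ x ∈ univ.filter fun x => G.Adj w x, deg G x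

/-- `T_w = Σ_{x ∈ N_G(w)} d_G(x)^2`. -/
noncomputable def Tsum [Fintype V] (G : SimpleGraph V) (w : V) : ℕ :=
  ∑ x ∈ univ.filter fun x => G.Adj w x, (deg G x) ^ 2

/-- The `r`-th elementary symmetric polynomial of the degree sequence of `G`. -/
noncomputable def esymmDeg [Fintype V] (G : SimpleGraph V) (r : ℕ) : ℕ :=
  ∑ s ∈ univ.powersetCard r, ∏ v ∈ s, deg G v

/-- `φ_2(G)`: the number of 2-matchings of `G`. -/
noncomputable def phi2 [Fintype V] (G : SimpleGraph V) : ℕ :=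
  ((matchings G).filter fun M => M.card = 2).card

/-!
Adding the edge `uv` raises the degrees of `u` and `v` by one and creates the matchings through
`uv`. Expanding `(x - d_u - 1)(x - d_v - 1)` in the terms of the matchings missing `u` and `v`, the
constant correction cancels exactly against the new matchings, so `LM_{G+uv} = LM_G - N_u - N_v`,
where `N_w = LMErase ℂ G w` is the Laplacian matching polynomial of `G - w` computed with the
degrees of `G`.
By Newton's identity `p_4` is a polynomial in the four top coefficients of `LM`. Only matchings
with at most one edge reach these coefficients, so they are elementary symmetric functions of the
degrees corrected by sums over edges, which the handshake lemma turns into `Σ d²` and `S_w`. The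
fourth coefficient of `LM_G`, which involves the 2-matchings, cancels in the difference.
-/

theorem _root_.Multiset.esymm_cons_succ {R : Type*} [CommSemiring R] (a : R) (s : Multiset R)
    (k : ℕ) : (a ::ₘ s).esymm (k + 1) = s.esymm (k + 1) + a * s.esymm k := by
  simp only [Multiset.esymm, Multiset.powersetCard_cons, Multiset.map_add, Multiset.sum_add,
    Multiset.map_map, Function.comp_def, Multiset.prod_cons, Multiset.sum_map_mul_left]

theorem _root_.Multiset.esymm_eq_zero_of_card_lt {R : Type*} [CommSemiring R] {s : Multiset R}
    {k : ℕ} (h : Multiset.card s < k) : s.esymm k = 0 := by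
  simp [Multiset.esymm, Multiset.powersetCard_eq_empty k h]

theorem _root_.Multiset.esymm_zero {R : Type*} [CommSemiring R] (s : Multiset R) :
    s.esymm 0 = 1 := by
  simp [Multiset.esymm]

theorem _root_.Multiset.esymm_one {R : Type*} [CommSemiring R] (s : Multiset R) :
    s.esymm 1 = s.sum := by
  simp [Multiset.esymm, Multiset.powersetCard_one]

theorem _root_.Finset.esymm_map_val_erase_succ {R : Type*} [CommRing R] (d : V → R)
    {s : Finset V} {a : V} (ha : a ∈ s) (k : ℕ) :
    ((s.erase a).val.map d).esymm (k + 1)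
      = (s.val.map d).esymm (k + 1) - d a * ((s.erase a).val.map d).esymm k := by
  have hs : s.val.map d = d a ::ₘ (s.erase a).val.map d := by
    rw [erase_val, ← Multiset.map_cons, Multiset.cons_erase ha]
  rw [hs, Multiset.esymm_cons_succ]
  ring

theorem _root_.Multiset.sum_map_pow_four {R : Type*} [CommRing R] (s : Multiset R) :
    (s.map (· ^ 4)).sum = s.esymm 1 ^ 4 - 4 * s.esymm 1 ^ 2 * s.esymm 2 + 2 * s.esymm 2 ^ 2
      + 4 * s.esymm 1 * s.esymm 3 - 4 * s.esymm 4 := by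
  induction s using Multiset.induction with
  | empty => simp [Multiset.esymm, Multiset.powersetCard_zero_right]
  | cons a s ih =>
    simp only [Multiset.map_cons, Multiset.sum_cons, ih, Multiset.esymm_cons_succ,
      Multiset.esymm_zero]
    ring

section TopCoeff

variable {R : Type*} [CommRing R]

/-- The coefficient of `X ^ (N - k)` in `p`, read as `0` when `k > N`. -/
noncomputable def topCoeff (N k : ℕ) (p : R[X]) : R := (p * X ^ k).coeff N

theorem topCoeff_add_add (N k j : ℕ) (p : R[X]) :
    topCoeff (N + j) (k + j) p = topCoeff N k p := by
  rw [topCoeff, topCoeff, pow_add, ← mul_assoc, coeff_mul_X_pow]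

theorem topCoeff_eq_zero_of_natDegree_add_lt {N k : ℕ} {p : R[X]} (h : p.natDegree + k < N) :
    topCoeff N k p = 0 := by
  rw [topCoeff, coeff_mul_X_pow', if_pos (by omega)]
  exact coeff_eq_zero_of_natDegree_lt (by omega)

theorem topCoeff_prod_X_sub_C (s : Multiset R) (k : ℕ) :
    topCoeff (Multiset.card s) k (s.map (X - C ·)).prod = (-1) ^ k * s.esymm k := by
  rw [topCoeff, coeff_mul_X_pow']
  split_ifs with hk
  · rw [Multiset.prod_X_sub_C_coeff s (Nat.sub_le _ _), Nat.sub_sub_self hk]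
  · rw [Multiset.esymm_eq_zero_of_card_lt (by omega), mul_zero]

theorem topCoeff_add_prod_X_sub_C (s : Multiset R) (j k : ℕ) :
    topCoeff (Multiset.card s + j) k (s.map (X - C ·)).prod
      = if j ≤ k then (-1) ^ (k - j) * s.esymm (k - j) else 0 := by
  split_ifs with hjk
  · rw [← topCoeff_prod_X_sub_C, ← topCoeff_add_add _ (k - j) j, Nat.sub_add_cancel hjk]
  · nontriviality R
    refine topCoeff_eq_zero_of_natDegree_add_lt ?_
    rw [natDegree_multiset_prod_X_sub_C_eq_card]
    omega

theorem topCoeff_natDegree_eq_esymm_roots {K : Type*} [Field K] [IsAlgClosed K] {p : K[X]}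
    (hp : p.Monic) (k : ℕ) : topCoeff p.natDegree k p = (-1) ^ k * p.roots.esymm k := by
  have hcard : Multiset.card p.roots = p.natDegree := IsAlgClosed.card_roots_eq_natDegree
  have hprod := prod_multiset_X_sub_C_of_monic_of_roots_card_eq hp hcard
  rw [← topCoeff_prod_X_sub_C, hcard, hprod]

theorem sum_roots_pow_four {K : Type*} [Field K] [IsAlgClosed K] {p : K[X]} (hp : p.Monic) :
    (p.roots.map (· ^ 4)).sum =
      let c k := topCoeff p.natDegree k p
      c 1 ^ 4 - 4 * c 1 ^ 2 * c 2 + 2 * c 2 ^ 2 + 4 * c 1 * c 3 - 4 * c 4 := by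
  simp only [topCoeff_natDegree_eq_esymm_roots hp, Multiset.sum_map_pow_four]
  ring

end TopCoeff

section Matchings

variable [Fintype V] {G : SimpleGraph V}

theorem mem_edges {e : Sym2 V} : e ∈ edges G ↔ e ∈ G.edgeSet := by
  simp [edges]

theorem mem_covered {M : Finset (Sym2 V)} {x : V} : x ∈ covered M ↔ ∃ e ∈ M, x ∈ e := by
  simp [covered]

theorem mem_matchings {M : Finset (Sym2 V)} : M ∈ matchings G ↔ IsMatching G M := by
  simp [matchings]

theorem card_covered {M : Finset (Sym2 V)} (hM : M ∈ matchings G) :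
    (covered M).card = 2 * M.card := by
  obtain ⟨hE, hdisj⟩ := mem_matchings.1 hM
  have hbiUnion : covered M = M.biUnion fun e => univ.filter (· ∈ e) := by ext; simp [covered]
  rw [hbiUnion, card_biUnion, card_eq_sum_ones, mul_sum]
  · refine sum_congr rfl fun e he => ?_
    induction e with
    | _ x y =>
      have hxy : x ≠ y := G.ne_of_adj (hE he)
      rw [show univ.filter (· ∈ s(x, y)) = {x, y} by ext; simp, card_pair hxy, mul_one]
  · intro e he f hf hef
    simp only [disjoint_left, mem_filter, mem_univ, true_and]
    exact hdisj e he f hf hef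

theorem covered_singleton (e : Sym2 V) : covered {e} = univ.filter (· ∈ e) := by
  ext; simp [covered]

theorem singleton_mem_matchings {e : Sym2 V} : {e} ∈ matchings G ↔ e ∈ G.edgeSet := by
  simp +contextual [mem_matchings, IsMatching]

theorem covered_singleton_subset_iff {e : Sym2 V} {A : Finset V} :
    covered {e} ⊆ A ↔ e ∈ A.sym2 := by
  simp [subset_iff, mem_covered, mem_sym2_iff]

theorem filter_card_le_one_matchings (A : Finset V) :
    ((matchings G).filter (covered · ⊆ A)).filter (·.card ≤ 1)
      = insert ∅ (((edges G).filter (· ∈ A.sym2)).map ⟨({·}), singleton_injective⟩) := by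
  ext M
  simp only [mem_filter, mem_insert, mem_map, Function.Embedding.coeFn_mk, mem_edges]
  constructor
  · rintro ⟨⟨hM, hA⟩, hcard⟩
    obtain rfl | ⟨e, rfl⟩ : M = ∅ ∨ ∃ e, M = {e} := by
      rcases M.eq_empty_or_nonempty with h | h
      · exact .inl h
      · exact .inr (card_eq_one.1 (by have := h.card_pos; omega))
    · exact .inl rfl
    · exact .inr
        ⟨e, ⟨singleton_mem_matchings.1 hM, covered_singleton_subset_iff.1 hA⟩, rfl⟩
  · rintro (rfl | ⟨e, ⟨he, heA⟩, rfl⟩)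
    · simp [mem_matchings, IsMatching, covered]
    · exact ⟨⟨singleton_mem_matchings.2 he, covered_singleton_subset_iff.2 heA⟩, by simp⟩

end Matchings

section WeightedMatchingPoly

variable {R : Type*} [CommRing R] [Fintype V] (G : SimpleGraph V) (d : V → R)

noncomputable def weightedMatchingPoly (A : Finset V) : R[X] :=
  ∑ M ∈ (matchings G).filter (covered · ⊆ A),
    (-1) ^ M.card * ∏ x ∈ A \ covered M, (X - C (d x))

theorem LM_eq_weightedMatchingPoly :
    LM R G = weightedMatchingPoly G (fun v => (deg G v : R)) univ := by
  rw [LM, weightedMatchingPoly, filter_true_of_mem fun M _ => subset_univ _]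

theorem topCoeff_weightedMatchingPoly (A : Finset V) (k : ℕ) :
    topCoeff A.card k (weightedMatchingPoly G d A)
      = ∑ M ∈ (matchings G).filter (covered · ⊆ A), (-1) ^ M.card *
          if 2 * M.card ≤ k then
            (-1) ^ (k - 2 * M.card) * ((A \ covered M).val.map d).esymm (k - 2 * M.card)
          else 0 := by
  simp only [topCoeff, weightedMatchingPoly, sum_mul, finsetSum_coeff, mul_assoc]
  refine sum_congr rfl fun M hM => ?_
  obtain ⟨hM, hA⟩ := mem_filter.1 hM
  have hcard : A.card = ((A \ covered M).val.map d).card + 2 * M.card := by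
    rw [Multiset.card_map, ← Finset.card_def, card_sdiff_of_subset hA, card_covered hM]
    have := card_le_card hA
    rw [card_covered hM] at this
    omega
  have hprod : ∏ x ∈ A \ covered M, (X - C (d x))
      = (((A \ covered M).val.map d).map (X - C ·)).prod := by
    rw [Multiset.map_map]; rfl
  rw [show (-1 : R[X]) ^ M.card = C ((-1) ^ M.card) by simp, coeff_C_mul, hprod, hcard,
    ← topCoeff_add_prod_X_sub_C]
  rfl

theorem topCoeff_weightedMatchingPoly_of_lt_four (A : Finset V) {k : ℕ} (hk : k < 4) :
    topCoeff A.card k (weightedMatchingPoly G d A)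
      = (-1) ^ k * (A.val.map d).esymm k
        - ∑ e ∈ (edges G).filter (· ∈ A.sym2),
            if 2 ≤ k then (-1) ^ k * ((A \ covered {e}).val.map d).esymm (k - 2) else 0 := by
  rw [topCoeff_weightedMatchingPoly, ← sum_filter_of_ne (p := (·.card ≤ 1)),
    filter_card_le_one_matchings, sum_insert, sum_map]
  · have hcov : covered (∅ : Finset (Sym2 V)) = ∅ := by simp [covered]
    simp only [hcov, card_empty, Function.Embedding.coeFn_mk, card_singleton, mul_zero, mul_one,
      pow_zero, pow_one, one_mul, neg_one_mul, zero_le, if_true, Nat.sub_zero, sdiff_empty]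
    rw [sub_eq_add_neg, ← sum_neg_distrib]
    congr 1
    refine sum_congr rfl fun e _ => ?_
    split_ifs with h2
    · rw [← Nat.sub_add_cancel h2, pow_add, Nat.add_sub_cancel]
      simp
    · simp
  · simp
  · intro M _ hM
    by_contra hcard
    exact hM (by rw [if_neg (by omega), mul_zero])

end WeightedMatchingPoly

section RaisedWeights

variable {R : Type*} [CommRing R] {u v : V}

theorem prod_X_sub_C_of_eq_add_one {d d' : V → R} (hu : d' u = d u + 1)
    (h : ∀ x, x ≠ u → d' x = d x) (S : Finset V) :
    ∏ x ∈ S, (X - C (d' x))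
      = ∏ x ∈ S, (X - C (d x)) - if u ∈ S then ∏ x ∈ S.erase u, (X - C (d x)) else 0 := by
  split_ifs with huS
  · rw [← mul_prod_erase S _ huS, ← mul_prod_erase S _ huS,
      prod_congr rfl fun x hx => by rw [h x (ne_of_mem_erase hx)], hu, C_add, C_1]
    ring
  · rw [sub_zero]
    exact prod_congr rfl fun x hx => by rw [h x (ne_of_mem_of_not_mem hx huS)]

theorem prod_X_sub_C_of_eq_add_one_of_eq_add_one {d d' : V → R} (huv : u ≠ v)
    (hu : d' u = d u + 1) (hv : d' v = d v + 1) (h : ∀ x, x ≠ u → x ≠ v → d' x = d x)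
    (S : Finset V) :
    ∏ x ∈ S, (X - C (d' x))
      = ∏ x ∈ S, (X - C (d x))
        - (if u ∈ S then ∏ x ∈ S.erase u, (X - C (d x)) else 0)
        - (if v ∈ S then ∏ x ∈ S.erase v, (X - C (d x)) else 0)
        + if u ∈ S ∧ v ∈ S then ∏ x ∈ (S.erase u).erase v, (X - C (d x)) else 0 := by
  set d₁ := Function.update d u (d u + 1)
  have h₁ : ∀ x, x ≠ u → d₁ x = d x := fun x hx => Function.update_of_ne hx _ _
  have h₁' : ∀ x, x ≠ v → d' x = d₁ x := fun x hxv => by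
    by_cases hxu : x = u
    · simp [d₁, hxu, hu]
    · rw [h x hxu hxv, h₁ x hxu]
  rw [prod_X_sub_C_of_eq_add_one (u := v) (d := d₁) (by rw [hv, h₁ v huv.symm]) h₁',
    prod_X_sub_C_of_eq_add_one (d := d) (by simp [d₁]) h₁,
    prod_X_sub_C_of_eq_add_one (d := d) (by simp [d₁]) h₁, erase_right_comm]
  by_cases huS : u ∈ S <;> by_cases hvS : v ∈ S <;> simp [huS, hvS, huv]
  ring

theorem prod_sdiff_X_sub_C_of_eq_add_one_of_eq_add_one {d d' : V → R} (huv : u ≠ v)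
    (hu : d' u = d u + 1) (hv : d' v = d v + 1) (h : ∀ x, x ≠ u → x ≠ v → d' x = d x)
    {A : Finset V} (huA : u ∈ A) (hvA : v ∈ A) (T : Finset V) :
    ∏ x ∈ A \ T, (X - C (d' x))
      = ∏ x ∈ A \ T, (X - C (d x))
        - (if u ∉ T then ∏ x ∈ A.erase u \ T, (X - C (d x)) else 0)
        - (if v ∉ T then ∏ x ∈ A.erase v \ T, (X - C (d x)) else 0)
        + if u ∉ T ∧ v ∉ T then ∏ x ∈ (A.erase u).erase v \ T, (X - C (d x)) else 0 := by
  rw [prod_X_sub_C_of_eq_add_one_of_eq_add_one huv hu hv h]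
  simp only [mem_sdiff, huA, hvA, true_and, ← erase_sdiff_comm]

end RaisedWeights

section AddEdgeMatchings

variable {G : SimpleGraph V} {u v : V}

theorem addEdge_adj {x y : V} :
    (addEdge G u v).Adj x y ↔ G.Adj x y ∨ ((x = u ∧ y = v ∨ x = v ∧ y = u) ∧ x ≠ y) :=
  SimpleGraph.sup_adj .. |>.trans (or_congr_right (SimpleGraph.edge_adj ..))

theorem addEdge_comm : addEdge G u v = addEdge G v u := by
  rw [addEdge, addEdge, ← SimpleGraph.edge, ← SimpleGraph.edge, SimpleGraph.edge_comm]

theorem isMatching_addEdge_iff {M : Finset (Sym2 V)} (h : s(u, v) ∉ M) :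
    IsMatching (addEdge G u v) M ↔ IsMatching G M := by
  refine and_congr_left'
    ⟨fun hM e he => ?_, fun hM => hM.trans (SimpleGraph.edgeSet_mono le_sup_left)⟩
  rcases (SimpleGraph.edgeSet_sup ..).le (hM he) with h' | h'
  · exact h'
  · exact absurd (SimpleGraph.edgeSet_edge_subset h' ▸ he) h

variable [Fintype V]

theorem isMatching_insert {H : SimpleGraph V} {e : Sym2 V} {M : Finset (Sym2 V)} (he : e ∉ M) :
    IsMatching H (insert e M)
      ↔ e ∈ H.edgeSet ∧ IsMatching H M ∧ ∀ x ∈ e, x ∉ covered M := by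
  simp only [IsMatching, coe_insert, Set.insert_subset_iff, mem_insert, mem_covered]
  constructor
  · rintro ⟨⟨hH, hM⟩, hdisj⟩
    refine ⟨hH, ⟨hM, fun f hf g hg hfg => hdisj f (.inr hf) g (.inr hg) hfg⟩, ?_⟩
    rintro x hx ⟨f, hf, hxf⟩
    exact hdisj e (.inl rfl) f (.inr hf) (by rintro rfl; exact he hf) x hx hxf
  · rintro ⟨hH, ⟨hM, hdisj⟩, he⟩
    refine ⟨⟨hH, hM⟩, ?_⟩
    rintro f (rfl | hf) g (rfl | hg) hfg x hxf hxg
    · exact hfg rfl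
    · exact he x hxf ⟨g, hg, hxg⟩
    · exact he x hxg ⟨f, hf, hxf⟩
    · exact hdisj f hf g hg hfg x hxf hxg

theorem mk_notMem_of_mem_matchings (hne : ¬ G.Adj u v) {M : Finset (Sym2 V)}
    (hM : M ∈ matchings G) : s(u, v) ∉ M :=
  fun h => hne ((mem_matchings.1 hM).1 h)

theorem matchings_addEdge (huv : u ≠ v) (hne : ¬ G.Adj u v) :
    matchings (addEdge G u v) = matchings G
      ∪ ((matchings G).filter fun M => u ∉ covered M ∧ v ∉ covered M).image
          (insert s(u, v)) := by
  ext M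
  simp only [mem_union, mem_image, mem_filter, mem_matchings]
  constructor
  · intro hM
    by_cases h : s(u, v) ∈ M
    · rw [← insert_erase h, isMatching_insert (notMem_erase _ _),
        isMatching_addEdge_iff (notMem_erase _ _)] at hM
      exact .inr
        ⟨M.erase s(u, v), ⟨hM.2.1, hM.2.2 u (by simp), hM.2.2 v (by simp)⟩, insert_erase h⟩
    · exact .inl ((isMatching_addEdge_iff h).1 hM)
  · rintro (hM | ⟨M, ⟨hM, hu, hv⟩, rfl⟩)
    · exact (isMatching_addEdge_iff (mk_notMem_of_mem_matchings hne (mem_matchings.2 hM))).2 hM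
    · have hM' := mk_notMem_of_mem_matchings hne (mem_matchings.2 hM)
      refine (isMatching_insert hM').2
        ⟨by simp [addEdge, huv], (isMatching_addEdge_iff hM').2 hM, ?_⟩
      simp [hu, hv]

end AddEdgeMatchings

section AddEdgePoly

variable {R : Type*} [CommRing R] [Fintype V] {G : SimpleGraph V} {u v : V}

theorem covered_insert_mk (M : Finset (Sym2 V)) :
    covered (insert s(u, v) M) = insert u (insert v (covered M)) := by
  ext x
  simp only [mem_covered, mem_insert, exists_eq_or_imp, Sym2.mem_iff, or_assoc]

theorem sdiff_covered_insert_mk (A : Finset V) (M : Finset (Sym2 V)) :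
    A \ covered (insert s(u, v) M) = (A.erase u).erase v \ covered M := by
  ext x
  simp only [covered_insert_mk, mem_sdiff, mem_insert, mem_erase]
  tauto

theorem filter_matchings_addEdge (huv : u ≠ v) (hne : ¬ G.Adj u v) {A : Finset V} (hu : u ∈ A)
    (hv : v ∈ A) :
    (matchings (addEdge G u v)).filter (covered · ⊆ A)
      = (matchings G).filter (covered · ⊆ A)
        ∪ ((matchings G).filter (covered · ⊆ (A.erase u).erase v)).image (insert s(u, v)) := by
  rw [matchings_addEdge huv hne, filter_union, filter_image, filter_filter]
  congr 2
  refine filter_congr fun M _ => ?_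
  simp only [covered_insert_mk, insert_subset_iff, subset_erase, hu, hv]
  tauto

theorem weightedMatchingPoly_addEdge (huv : u ≠ v) (hne : ¬ G.Adj u v) {d d' : V → R}
    (hdu : d' u = d u + 1) (hdv : d' v = d v + 1) (hd : ∀ x, x ≠ u → x ≠ v → d' x = d x)
    {A : Finset V} (hu : u ∈ A) (hv : v ∈ A) :
    weightedMatchingPoly (addEdge G u v) d' A
      = weightedMatchingPoly G d A - weightedMatchingPoly G d (A.erase u)
        - weightedMatchingPoly G d (A.erase v) := by
  set 𝓜 : Finset V → Finset (Finset (Sym2 V)) :=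
    fun B => (matchings G).filter (covered · ⊆ B)
  have hnotMem : ∀ B, ∀ M ∈ 𝓜 B, s(u, v) ∉ M := fun B M hM =>
    mk_notMem_of_mem_matchings hne (mem_filter.1 hM).1
  have hdisj : Disjoint (𝓜 A) ((𝓜 ((A.erase u).erase v)).image (insert s(u, v))) := by
    simp only [disjoint_right, mem_image]
    rintro _ ⟨M, -, rfl⟩ hM
    exact hnotMem A _ hM (mem_insert_self _ _)
  have hinj : Set.InjOn (insert s(u, v)) (𝓜 ((A.erase u).erase v) : Set (Finset (Sym2 V))) := by
    intro M₁ h₁ M₂ h₂ h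
    rw [← erase_insert (hnotMem _ M₁ h₁), h, erase_insert (hnotMem _ M₂ h₂)]
  have hnew : ∀ M ∈ 𝓜 ((A.erase u).erase v),
      (-1) ^ (insert s(u, v) M).card * ∏ x ∈ A \ covered (insert s(u, v) M), (X - C (d' x))
        = -((-1) ^ M.card * ∏ x ∈ (A.erase u).erase v \ covered M, (X - C (d x))) := by
    intro M hM
    rw [card_insert_of_notMem (hnotMem _ M hM), sdiff_covered_insert_mk, pow_succ,
      prod_congr rfl fun x hx => by
        obtain ⟨hxv, hxu⟩ := mem_erase.1 (mem_sdiff.1 hx).1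
        rw [hd x (mem_erase.1 hxu).1 hxv]]
    ring
  have hfilter : ∀ B (p : Finset (Sym2 V) → Prop) [DecidablePred p],
      (∀ M : Finset (Sym2 V), covered M ⊆ A ∧ p M ↔ covered M ⊆ B) →
        (𝓜 A).filter p = 𝓜 B :=
    fun B p _ h => by rw [filter_filter]; exact filter_congr fun M _ => h M
  rw [weightedMatchingPoly, filter_matchings_addEdge huv hne hu hv, sum_union hdisj,
    sum_image hinj, sum_congr rfl hnew]
  simp only [prod_sdiff_X_sub_C_of_eq_add_one_of_eq_add_one huv hdu hdv hd hu hv, mul_sub, mul_add,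
    mul_ite, mul_zero, sum_add_distrib, sum_sub_distrib, sum_neg_distrib, ← sum_filter]
  rw [hfilter (A.erase u) _ fun M => subset_erase.symm,
    hfilter (A.erase v) _ fun M => subset_erase.symm,
    hfilter ((A.erase u).erase v) _ fun M => by simp only [subset_erase]; tauto]
  simp only [weightedMatchingPoly, 𝓜]
  ring

end AddEdgePoly

section LowCoeffs

variable {R : Type*} [CommRing R] [Fintype V] (G : SimpleGraph V) (d : V → R) (A : Finset V)

theorem topCoeff_weightedMatchingPoly_zero :
    topCoeff A.card 0 (weightedMatchingPoly G d A) = 1 := by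
  simp [topCoeff_weightedMatchingPoly_of_lt_four, Multiset.esymm_zero]

theorem topCoeff_weightedMatchingPoly_one :
    topCoeff A.card 1 (weightedMatchingPoly G d A) = -∑ x ∈ A, d x := by
  simp [topCoeff_weightedMatchingPoly_of_lt_four, Multiset.esymm_one]

theorem topCoeff_weightedMatchingPoly_two :
    topCoeff A.card 2 (weightedMatchingPoly G d A)
      = (A.val.map d).esymm 2 - #((edges G).filter (· ∈ A.sym2)) := by
  simp [topCoeff_weightedMatchingPoly_of_lt_four, Multiset.esymm_zero]

theorem topCoeff_weightedMatchingPoly_three :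
    topCoeff A.card 3 (weightedMatchingPoly G d A)
      = -(A.val.map d).esymm 3 + #((edges G).filter (· ∈ A.sym2)) * ∑ x ∈ A, d x
        - ∑ e ∈ (edges G).filter (· ∈ A.sym2), ∑ x ∈ covered {e}, d x := by
  rw [topCoeff_weightedMatchingPoly_of_lt_four _ _ _ (by norm_num)]
  have hsdiff : ∀ e ∈ (edges G).filter (· ∈ A.sym2),
      ((A \ covered {e}).val.map d).esymm 1 = ∑ x ∈ A, d x - ∑ x ∈ covered {e}, d x := by
    intro e he
    rw [Multiset.esymm_one,
      ← sum_sdiff_eq_sub (covered_singleton_subset_iff.2 (mem_filter.1 he).2)]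
    rfl
  simp only [Nat.reduceLeDiff, if_true, Nat.reduceSub]
  rw [sum_congr rfl fun e he => by rw [hsdiff e he]]
  simp only [← mul_sum, sum_sub_distrib, sum_const, nsmul_eq_mul]
  ring

theorem natDegree_weightedMatchingPoly_le : (weightedMatchingPoly G d A).natDegree ≤ A.card := by
  nontriviality R
  refine natDegree_sum_le_of_forall_le _ _ fun M _ => natDegree_mul_le.trans ?_
  rw [show (-1 : R[X]) ^ M.card = C ((-1) ^ M.card) by simp, natDegree_C, zero_add,
    natDegree_finsetProd_X_sub_C_eq_card]
  exact card_le_card sdiff_subset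

theorem weightedMatchingPoly_monic : (weightedMatchingPoly G d A).Monic := by
  refine monic_of_natDegree_le_of_coeff_eq_one _ (natDegree_weightedMatchingPoly_le G d A) ?_
  simpa [topCoeff] using topCoeff_weightedMatchingPoly_zero G d A

theorem natDegree_weightedMatchingPoly [Nontrivial R] :
    (weightedMatchingPoly G d A).natDegree = A.card :=
  natDegree_eq_of_le_of_coeff_ne_zero (natDegree_weightedMatchingPoly_le G d A) <| by
    simpa [topCoeff] using (topCoeff_weightedMatchingPoly_zero G d A).trans_ne one_ne_zero

end LowCoeffs

section Incidence

variable {R : Type*} [CommRing R] [Fintype V] (G : SimpleGraph V)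

theorem filter_mem_edges (w : V) :
    (edges G).filter (w ∈ ·) = (univ.filter (G.Adj w)).image (s(w, ·)) := by
  ext e
  induction e with
  | _ x y =>
    simp only [mem_filter, mem_edges, SimpleGraph.mem_edgeSet, Sym2.mem_iff, mem_image, mem_univ,
      true_and, Sym2.eq_iff]
    constructor
    · rintro ⟨hxy, rfl | rfl⟩
      · exact ⟨y, hxy, .inl ⟨rfl, rfl⟩⟩
      · exact ⟨x, hxy.symm, .inr ⟨rfl, rfl⟩⟩
    · rintro ⟨z, hz, ⟨rfl, rfl⟩ | ⟨rfl, rfl⟩⟩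
      · exact ⟨hz, .inl rfl⟩
      · exact ⟨hz.symm, .inr rfl⟩

theorem sum_filter_mem_edges (w : V) (g : Sym2 V → R) :
    ∑ e ∈ (edges G).filter (w ∈ ·), g e = ∑ x ∈ univ.filter (G.Adj w), g s(w, x) := by
  rw [filter_mem_edges, sum_image fun x _ y _ h => Sym2.congr_right.1 h]

theorem card_filter_mem_edges (w : V) : #((edges G).filter (w ∈ ·)) = deg G w := by
  rw [filter_mem_edges, card_image_of_injective _ fun x y h => Sym2.congr_right.1 h, deg]

theorem sum_edges_sum_covered (f : V → R) :
    ∑ e ∈ edges G, ∑ x ∈ covered {e}, f x = ∑ x, (deg G x : R) * f x := by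
  simp only [covered_singleton, sum_filter]
  rw [sum_comm]
  refine sum_congr rfl fun x _ => ?_
  rw [← sum_filter, sum_const, card_filter_mem_edges, nsmul_eq_mul]

theorem sum_filter_mem_edges_sum_covered (w : V) (f : V → R) :
    ∑ e ∈ (edges G).filter (w ∈ ·), ∑ x ∈ covered {e}, f x
      = deg G w * f w + ∑ x ∈ univ.filter (G.Adj w), f x := by
  rw [sum_filter_mem_edges]
  have hpair : ∀ x ∈ univ.filter (G.Adj w), ∑ y ∈ covered {s(w, x)}, f y = f w + f x := by
    intro x hx
    have hwx : w ≠ x := G.ne_of_adj (mem_filter.1 hx).2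
    rw [covered_singleton, show univ.filter (· ∈ s(w, x)) = {w, x} by ext; simp,
      sum_pair hwx]
  rw [sum_congr rfl hpair, sum_add_distrib, sum_const, nsmul_eq_mul, deg]

end Incidence

section LaplacianMatchingPoly

variable (R : Type*) [CommRing R] [Fintype V] (G : SimpleGraph V)

noncomputable def LMErase (w : V) : R[X] :=
  weightedMatchingPoly G (fun x => (deg G x : R)) (univ.erase w)

theorem LM_monic : (LM R G).Monic := by
  rw [LM_eq_weightedMatchingPoly]
  exact weightedMatchingPoly_monic _ _ _

theorem natDegree_LM [Nontrivial R] : (LM R G).natDegree = Fintype.card V := by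
  rw [LM_eq_weightedMatchingPoly, natDegree_weightedMatchingPoly, card_univ]

variable {R G}

theorem filter_edges_mem_sym2_univ : (edges G).filter (· ∈ (univ : Finset V).sym2) = edges G :=
  filter_true_of_mem fun _ _ => mem_sym2_iff.2 fun _ _ => mem_univ _

theorem filter_edges_mem_sym2_erase (w : V) :
    (edges G).filter (· ∈ (univ.erase w).sym2) = (edges G).filter (w ∉ ·) :=
  filter_congr fun e _ => by
    simp only [mem_sym2_iff, mem_erase, mem_univ, and_true]
    exact ⟨fun h hw => h w hw rfl, fun h x hx hxw => h (hxw ▸ hx)⟩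

theorem topCoeff_LM_one : topCoeff (Fintype.card V) 1 (LM R G) = -∑ x, (deg G x : R) := by
  rw [LM_eq_weightedMatchingPoly, ← card_univ, topCoeff_weightedMatchingPoly_one]

theorem topCoeff_LM_two :
    topCoeff (Fintype.card V) 2 (LM R G)
      = (univ.val.map fun x => (deg G x : R)).esymm 2 - #(edges G) := by
  rw [LM_eq_weightedMatchingPoly, ← card_univ, topCoeff_weightedMatchingPoly_two,
    filter_edges_mem_sym2_univ]

theorem topCoeff_LM_three :
    topCoeff (Fintype.card V) 3 (LM R G)
      = -(univ.val.map fun x => (deg G x : R)).esymm 3 + #(edges G) * ∑ x, (deg G x : R)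
        - ∑ x, (deg G x : R) * deg G x := by
  rw [LM_eq_weightedMatchingPoly, ← card_univ, topCoeff_weightedMatchingPoly_three,
    filter_edges_mem_sym2_univ, sum_edges_sum_covered]

variable (w : V)

theorem topCoeff_LMErase_zero : topCoeff (univ.erase w).card 0 (LMErase R G w) = 1 :=
  topCoeff_weightedMatchingPoly_zero _ _ _

theorem topCoeff_LMErase_one :
    topCoeff (univ.erase w).card 1 (LMErase R G w) = -(∑ x, (deg G x : R) - deg G w) := by
  rw [LMErase, topCoeff_weightedMatchingPoly_one, sum_erase_eq_sub (mem_univ w)]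

theorem card_filter_not_mem_edges :
    (#((edges G).filter (w ∉ ·)) : R) = #(edges G) - deg G w := by
  rw [← card_filter_mem_edges G w, eq_sub_iff_add_eq, ← Nat.cast_add, add_comm,
    card_filter_add_card_filter_not]

theorem topCoeff_LMErase_two :
    topCoeff (univ.erase w).card 2 (LMErase R G w)
      = ((univ.erase w).val.map fun x => (deg G x : R)).esymm 2 - (#(edges G) - deg G w) := by
  rw [LMErase, topCoeff_weightedMatchingPoly_two, filter_edges_mem_sym2_erase,
    card_filter_not_mem_edges]

theorem topCoeff_LMErase_three :
    topCoeff (univ.erase w).card 3 (LMErase R G w)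
      = -((univ.erase w).val.map fun x => (deg G x : R)).esymm 3
        + (#(edges G) - deg G w) * (∑ x, (deg G x : R) - deg G w)
        - (∑ x, (deg G x : R) * deg G x - deg G w * deg G w
            - ∑ x ∈ univ.filter (G.Adj w), (deg G x : R)) := by
  rw [LMErase, topCoeff_weightedMatchingPoly_three, filter_edges_mem_sym2_erase,
    card_filter_not_mem_edges, sum_erase_eq_sub (mem_univ w),
    ← sum_edges_sum_covered, ← sum_filter_add_sum_filter_not (edges G) (w ∈ ·),
    sum_filter_mem_edges_sum_covered]
  ring

end LaplacianMatchingPoly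

section AddEdgeLM

variable {R : Type*} [CommRing R] [Fintype V] {G : SimpleGraph V} {u v : V}

theorem deg_addEdge_left (huv : u ≠ v) (hne : ¬ G.Adj u v) :
    deg (addEdge G u v) u = deg G u + 1 := by
  rw [deg, deg, ← card_insert_of_notMem (by simpa using hne)]
  congr 1
  ext y
  simp only [mem_filter, mem_univ, true_and, mem_insert, addEdge_adj]
  grind

theorem deg_addEdge_right (huv : u ≠ v) (hne : ¬ G.Adj u v) :
    deg (addEdge G u v) v = deg G v + 1 := by
  rw [addEdge_comm, deg_addEdge_left huv.symm fun h => hne h.symm]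

theorem deg_addEdge_of_ne {x : V} (hxu : x ≠ u) (hxv : x ≠ v) :
    deg (addEdge G u v) x = deg G x := by
  simp only [deg, addEdge_adj, hxu, hxv, false_and, or_false]

theorem LM_addEdge (huv : u ≠ v) (hne : ¬ G.Adj u v) :
    LM R (addEdge G u v) = LM R G - LMErase R G u - LMErase R G v := by
  rw [LM_eq_weightedMatchingPoly, LM_eq_weightedMatchingPoly,
    weightedMatchingPoly_addEdge huv hne (d := fun x => (deg G x : R)) _ _ _ (mem_univ u)
      (mem_univ v)]
  · rfl
  · simp [deg_addEdge_left huv hne]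
  · simp [deg_addEdge_right huv hne]
  · intro x hxu hxv
    simp [deg_addEdge_of_ne hxu hxv]

theorem topCoeff_LM_addEdge (huv : u ≠ v) (hne : ¬ G.Adj u v) (k : ℕ) :
    topCoeff (Fintype.card V) (k + 1) (LM R (addEdge G u v))
      = topCoeff (Fintype.card V) (k + 1) (LM R G)
        - topCoeff (univ.erase u).card k (LMErase R G u)
        - topCoeff (univ.erase v).card k (LMErase R G v) := by
  have hcard : ∀ w : V, Fintype.card V = (univ.erase w).card + 1 := fun w => by
    rw [card_erase_add_one (mem_univ w), card_univ]
  rw [LM_addEdge huv hne, ← topCoeff_add_add _ k 1 (LMErase R G u), ← hcard,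
    ← topCoeff_add_add _ k 1 (LMErase R G v), ← hcard]
  simp only [topCoeff, sub_mul, coeff_sub]

end AddEdgeLM

/-- `p_4(G+uv) - p_4(G) = 4(S_u + S_v) + 4a³ + 18a² + 4ab + 24a + 4b³ + 18b² + 24b + 16`
where `a = d_G(u)`, `b = d_G(v)`. -/
theorem delta_p4 [Fintype V] (G : SimpleGraph V) (u v : V) (huv : u ≠ v)
    (hne : ¬ G.Adj u v) :
    psum (addEdge G u v) 4 - psum G 4 =
      4 * ((Ssum G u : ℂ) + (Ssum G v : ℂ))
        + 4 * (deg G u : ℂ)^3 + 18 * (deg G u : ℂ)^2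
        + 4 * (deg G u : ℂ) * (deg G v : ℂ) + 24 * (deg G u : ℂ)
        + 4 * (deg G v : ℂ)^3 + 18 * (deg G v : ℂ)^2 + 24 * (deg G v : ℂ) + 16 := by
  rw [psum, psum, sum_roots_pow_four (LM_monic ℂ _), sum_roots_pow_four (LM_monic ℂ G),
    natDegree_LM, natDegree_LM]
  simp only [topCoeff_LM_addEdge huv hne, topCoeff_LM_one, topCoeff_LM_two, topCoeff_LM_three,
    topCoeff_LMErase_zero, topCoeff_LMErase_one, topCoeff_LMErase_two, topCoeff_LMErase_three,
    esymm_map_val_erase_succ _ (mem_univ _), Multiset.esymm_zero, Multiset.esymm_one, sum_map_val,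
    Nat.reduceAdd]
  simp only [Ssum, Nat.cast_sum]
  ring

end LMRIV
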